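/- arXiv:1302.4009 — 6 statements merged into one kernel-verified Lean document; each statement's English description precedes it below -/
import Mathlib

section
/- There exists a topological subset model and an epistemic scenario at which int(p) → K(p → int(p)) fails. -/
/-- Formulas of the public announcement language PAL (with the `int` modality). -/
inductive Form : Type
  | atom : ℕ → Form
  | neg : Form → Form
  | and : Form → Form → Form
  | K : Form → Form
  | int : Form → Form
  | ann : Form → Form → Form

/-- Material implication, defined classically. -/
def Form.imp (φ ψ : Form) : Form := .neg (.and φ (.neg ψ))

/-- Int-semantics for PAL on a topological subset model with valuation `v`. -/
def sat {α : Type*} [TopologicalSpace α] (v : ℕ → Set α) : Form → α → Set α → Prop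
  | .atom n, x, _ => x ∈ v n
  | .neg φ, x, U => ¬ sat v φ x U
  | .and φ ψ, x, U => sat v φ x U ∧ sat v ψ x U
  | .K φ, x, U => ∀ y ∈ U, sat v φ y U
  | .int φ, x, U => x ∈ interior {y ∈ U | sat v φ y U}
  | .ann φ ψ, x, U =>
      x ∈ interior {y ∈ U | sat v φ y U} → sat v ψ x (interior {y ∈ U | sat v φ y U})

open Set Filter Topology

section

variable {α : Type*} [TopologicalSpace α]

theorem sat_imp (v : ℕ → Set α) (φ ψ : Form) (x : α) (U : Set α) :
    sat v (φ.imp ψ) x U ↔ (sat v φ x U → sat v ψ x U) := by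
  simp only [Form.imp, sat]
  tauto

theorem not_sat_int_imp_K_imp_int {v : ℕ → Set α} {n : ℕ} {x y : α} {U : Set α}
    (hx : x ∈ interior (U ∩ v n)) (hy : y ∈ U ∩ v n) (hy' : y ∉ interior (U ∩ v n)) :
    ¬ sat v ((Form.int (.atom n)).imp (.K ((Form.atom n).imp (.int (.atom n))))) x U := by
  rw [sat_imp]
  exact fun h => hy' ((sat_imp v _ _ y U).1 (h hx y hy.1) hy.2)

theorem notMem_interior_union_singleton {A : Set α} {y : α} [(𝓝[≠] y).NeBot]
    (hy : y ∉ closure A) : y ∉ interior (A ∪ {y}) := by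
  intro hint
  have hA : A ∈ 𝓝[≠] y := by
    rw [← insert_mem_nhds_iff, insert_eq, union_comm]
    exact mem_interior_iff_mem_nhds.1 hint
  exact hy (mem_closure_iff_nhdsWithin_neBot.2 (NeBot.mono ‹_› (nhdsWithin_le_of_mem hA)))

/-- Adding a non-isolated point `y` outside the closure of an open set `A` to the valuation
of `p` makes `p` true at `y` without `int(p)` being true there. -/
theorem not_sat_int_imp_K_imp_int_of_union_singleton {A : Set α} {x y : α} [(𝓝[≠] y).NeBot]
    (hA : IsOpen A) (hx : x ∈ A) (hy : y ∉ closure A) :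
    ¬ sat (fun _ => A ∪ {y})
      ((Form.int (.atom 0)).imp (.K ((Form.atom 0).imp (.int (.atom 0))))) x univ := by
  apply not_sat_int_imp_K_imp_int (y := y)
  · rw [univ_inter]
    exact interior_maximal subset_union_left hA hx
  · exact ⟨trivial, Or.inr rfl⟩
  · rw [univ_inter]
    exact notMem_interior_union_singleton hy

end

/-- There is a topological subset model and an epistemic scenario at which the
scheme `int(p) → K(p → int(p))` fails. -/
theorem int_to_K_fails :
    ∃ (α : Type) (_ : TopologicalSpace α) (v : ℕ → Set α) (x : α) (U : Set α),
      x ∈ U ∧ IsOpen U ∧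
      ¬ sat v ((Form.int (.atom 0)).imp (.K ((Form.atom 0).imp (.int (.atom 0))))) x U := by
  have hy : (1 : ℝ) ∉ closure (Iio 0) := by
    rw [closure_Iio]
    norm_num
  exact ⟨ℝ, inferInstance, _, -1, univ, trivial, isOpen_univ,
    not_sat_int_imp_K_imp_int_of_union_singleton isOpen_Iio (by norm_num) hy⟩
end

section
/- There exists a topological subset model and an epistemic scenario at which ¬(p → int(p)) → K¬int(p) fails. -/
/-- There is a topological subset model and an epistemic scenario at which the
scheme `¬(p → int(p)) → K¬int(p)` fails. -/
theorem neg_int_to_K_fails :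
    ∃ (α : Type) (_ : TopologicalSpace α) (v : ℕ → Set α) (x : α) (U : Set α),
      x ∈ U ∧ IsOpen U ∧
      ¬ sat v ((Form.neg ((Form.atom 0).imp (.int (.atom 0)))).imp
                (.K (.neg (.int (.atom 0))))) x U := by
  refine ⟨ℝ, inferInstance, fun _ => Set.Ici 0, 0, Set.univ, trivial, isOpen_univ, ?_⟩
  have hset : interior {y : ℝ | y ∈ Set.univ ∧ y ∈ Set.Ici 0} = Set.Ioi 0 := by
    have : {y : ℝ | y ∈ Set.univ ∧ y ∈ Set.Ici 0} = Set.Ici 0 := by ext y; simp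
    rw [this, interior_Ici]
  simp only [sat, Form.imp, Set.mem_setOf_eq, not_not, not_forall, hset]
  exact ⟨⟨Set.self_mem_Ici, Set.notMem_Ioi_self⟩, 1, trivial, Set.mem_Ioi.2 one_pos⟩
end

section
/- EL_int is strictly more expressive than EL: there exist two topological subset models on {x,y}, one with the discrete topology and one with topology {∅,{y},{x,y}}, both with v(p) = {x}, that are linked by a partial bisimulation relating (x,{x,y}) to (x,{x,y}) and (y,{x,y}) to (y,{x,y}), yet int(p) holds at (x,{x,y}) in the first model and fails at (x,{x,y}) in the second. Hence no EL formula is equivalent to int(p). -/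
/-- Formulas of the basic epistemic language EL (atoms, Booleans, K). -/
inductive FormEL : Type
  | atom : ℕ → FormEL
  | neg : FormEL → FormEL
  | and : FormEL → FormEL → FormEL
  | K : FormEL → FormEL

/-- Standard semantics of EL on subset models (only the valuation matters). -/
def satEL {α : Type*} (v : ℕ → Set α) : FormEL → α → Set α → Prop
  | .atom n, x, _ => x ∈ v n
  | .neg φ, x, U => ¬ satEL v φ x U
  | .and φ ψ, x, U => satEL v φ x U ∧ satEL v ψ x U
  | .K φ, x, U => ∀ y ∈ U, satEL v φ y U

/-!
A partial bisimulation only sees the valuation and the epistemic ranges, so EL formulas are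
invariant under it, while `int p` also depends on the topology. On `{x, y}` (here `true`,
`false`) with `v(p) = {x}` and range `{x, y}`, the identity is a partial bisimulation between the
discrete space and the space whose only nontrivial open set is `{y}`. In the first `{x}` is open,
so `int p` holds at `x`; in the second the only neighbourhood of `x` is the whole space, so it
fails.
-/

open Topology

def IsPartialBisimulation {α β : Type*} (v : ℕ → Set α) (w : ℕ → Set β)
    (Z : α → Set α → β → Set β → Prop) : Prop :=
  ∀ x U y V, Z x U y V →
    (∀ p, x ∈ v p ↔ y ∈ w p) ∧
    (∀ a ∈ U, ∃ b ∈ V, Z a U b V) ∧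
    (∀ b ∈ V, ∃ a ∈ U, Z a U b V)

theorem IsPartialBisimulation.satEL_iff {α β : Type*} {v : ℕ → Set α} {w : ℕ → Set β}
    {Z : α → Set α → β → Set β → Prop} (hZ : IsPartialBisimulation v w Z) (φ : FormEL)
    {x : α} {U : Set α} {y : β} {V : Set β} (hxy : Z x U y V) :
    satEL v φ x U ↔ satEL w φ y V := by
  induction φ generalizing x y with
  | atom n => exact (hZ _ _ _ _ hxy).1 n
  | neg φ ih => simp only [satEL, ih hxy]
  | and φ ψ ihφ ihψ => simp only [satEL, ihφ hxy, ihψ hxy]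
  | K φ ih =>
    obtain ⟨-, forth, back⟩ := hZ _ _ _ _ hxy
    simp only [satEL]
    constructor
    · intro hU b hb
      obtain ⟨a, ha, hab⟩ := back b hb
      exact (ih hab).1 (hU a ha)
    · intro hV a ha
      obtain ⟨b, hb, hab⟩ := forth a ha
      exact (ih hab).2 (hV b hb)

def Form.IsELDefinable (χ : Form) : Prop :=
  ∃ φ : FormEL, ∀ (α : Type) (inst : TopologicalSpace α) (w : ℕ → Set α)
    (x : α) (U : Set α), x ∈ U → inst.IsOpen U → (satEL w φ x U ↔ @sat α inst w χ x U)

theorem Form.not_isELDefinable_of_isPartialBisimulation {α β : Type}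
    [tα : TopologicalSpace α] [tβ : TopologicalSpace β] {v : ℕ → Set α} {w : ℕ → Set β}
    {Z : α → Set α → β → Set β → Prop} (hZ : IsPartialBisimulation v w Z) {χ : Form}
    {x : α} {U : Set α} {y : β} {V : Set β} (hxy : Z x U y V)
    (hx : x ∈ U) (hU : IsOpen U) (hy : y ∈ V) (hV : IsOpen V)
    (hχx : sat v χ x U) (hχy : ¬ sat w χ y V) :
    ¬ χ.IsELDefinable := by
  rintro ⟨φ, hφ⟩
  exact hχy <| (hφ β tβ w y V hy hV).1 <| (hZ.satEL_iff φ hxy).1 <| (hφ α tα v x U hx hU).2 hχx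

theorem sat_int_atom_iff {α : Type*} [TopologicalSpace α] {v : ℕ → Set α} {n : ℕ} {x : α}
    {U : Set α} : sat v (.int (.atom n)) x U ↔ x ∈ interior (U ∩ v n) :=
  Iff.rfl

theorem sat_int_atom_of_discreteTopology {α : Type*} [TopologicalSpace α] [DiscreteTopology α]
    {v : ℕ → Set α} {n : ℕ} {x : α} {U : Set α} (hU : x ∈ U) (hx : x ∈ v n) :
    sat v (.int (.atom n)) x U := by
  rw [sat_int_atom_iff, (isOpen_discrete _).interior_eq]
  exact ⟨hU, hx⟩

theorem not_sat_int_atom_of_nhds_eq_top {α : Type*} [TopologicalSpace α] {v : ℕ → Set α}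
    {n : ℕ} {x y : α} {U : Set α} (hx : 𝓝 x = ⊤) (hy : y ∉ v n) :
    ¬ sat v (.int (.atom n)) x U := by
  rw [sat_int_atom_iff, mem_interior_iff_mem_nhds, hx, Filter.mem_top]
  exact fun h => hy (Set.eq_univ_iff_forall.1 h y).2

theorem nhds_generateFrom_eq_top {α : Type*} {g : Set (Set α)} {x : α} (hx : ∀ s ∈ g, x ∉ s) :
    @nhds α (TopologicalSpace.generateFrom g) x = ⊤ := by
  rw [TopologicalSpace.nhds_generateFrom]
  exact iInf₂_eq_top.2 fun s hs => absurd hs.1 (hx s hs.2)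

/-- `EL_int` is strictly more expressive than `EL`: two topological subset models on
`Bool` (one discrete, one with topology `{∅, {false}, univ}`), both with `v(p) = {true}`,
are linked by a partial bisimulation relating `(x, univ)` to itself for each point, yet
`int(p)` holds at `(true, univ)` in the first and fails there in the second.
Hence no EL formula is equivalent to `int(p)`. -/
theorem el_int_strictly_more_expressive :
    let t1 : TopologicalSpace Bool := ⊥
    let t2 : TopologicalSpace Bool := TopologicalSpace.generateFrom {{false}}
    let v : ℕ → Set Bool := fun _ => {true}
    let Z : Bool → Set Bool → Bool → Set Bool → Prop :=
      fun x U y V => U = Set.univ ∧ V = Set.univ ∧ x = y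
    -- Z is a partial bisimulation relating the two scenarios
    ((∀ x U y V, Z x U y V →
        (∀ p, x ∈ v p ↔ y ∈ v p) ∧
        (∀ a ∈ U, ∃ b ∈ V, Z a U b V) ∧
        (∀ b ∈ V, ∃ a ∈ U, Z a U b V)) ∧
      Z true Set.univ true Set.univ ∧ Z false Set.univ false Set.univ) ∧
    -- int(p) distinguishes the two related scenarios
    (@sat Bool t1 v (.int (.atom 0)) true Set.univ ∧
      ¬ @sat Bool t2 v (.int (.atom 0)) true Set.univ) ∧
    -- hence no EL formula is equivalent to int(p) over topological subset models
    ¬ ∃ φ : FormEL, ∀ (α : Type) (inst : TopologicalSpace α) (w : ℕ → Set α)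
        (x : α) (U : Set α), x ∈ U → inst.IsOpen U →
        (satEL w φ x U ↔ @sat α inst w (.int (.atom 0)) x U) := by
  intro t1 t2 v Z
  have hZ : IsPartialBisimulation v v Z := by
    rintro x U y V ⟨rfl, rfl, rfl⟩
    exact ⟨fun _ => Iff.rfl, fun a _ => ⟨a, trivial, rfl, rfl, rfl⟩,
      fun b _ => ⟨b, trivial, rfl, rfl, rfl⟩⟩
  have hdiscrete : @sat Bool t1 v (.int (.atom 0)) true Set.univ :=
    @sat_int_atom_of_discreteTopology _ t1 (discreteTopology_bot Bool) _ _ _ _ trivial rfl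
  have hsierpinski : ¬ @sat Bool t2 v (.int (.atom 0)) true Set.univ :=
    @not_sat_int_atom_of_nhds_eq_top _ t2 _ _ _ false _
      (nhds_generateFrom_eq_top (by simp)) (by simp [v])
  exact ⟨⟨hZ, ⟨rfl, rfl, rfl⟩, ⟨rfl, rfl, rfl⟩⟩, ⟨hdiscrete, hsierpinski⟩,
    Form.not_isELDefinable_of_isPartialBisimulation (tα := t1) (tβ := t2) hZ ⟨rfl, rfl, rfl⟩
      trivial (@isOpen_univ _ t1) trivial (@isOpen_univ _ t2) hdiscrete hsierpinski⟩
end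

section
/- In int-semantics, the reduction scheme [φ]Kψ ↔ (int(φ) → K[φ]ψ) is valid. -/
theorem sat_imp_iff {α : Type*} [TopologicalSpace α] (v : ℕ → Set α) (φ ψ : Form) (x : α)
    (U : Set α) : sat v (φ.imp ψ) x U ↔ (sat v φ x U → sat v ψ x U) := by
  simp only [Form.imp, sat, not_and, not_not]

theorem interior_sep_subset {α : Type*} [TopologicalSpace α] (U : Set α) (p : α → Prop) :
    interior {y ∈ U | p y} ⊆ U :=
  interior_subset.trans (Set.sep_subset U p)

theorem reduction_K_general {α : Type*} [TopologicalSpace α] (v : ℕ → Set α) (φ ψ : Form)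
    (x : α) (U : Set α) :
    sat v (.ann φ (.K ψ)) x U ↔ sat v ((Form.int φ).imp (.K (.ann φ ψ))) x U := by
  rw [sat_imp_iff]
  simp only [sat]
  -- The announced model `int [[φ]]^U` lies inside `U`, so `K` over it is `K` over `U` guarded by `[φ]`.
  exact ⟨fun h hx y _ hy => h hx y hy,
    fun h hx y hy => h hx y (interior_sep_subset U _ hy) hy⟩

/-- Reduction scheme for knowledge: `[φ]Kψ ↔ (int(φ) → K[φ]ψ)` is valid in int-semantics. -/
theorem reduction_K {α : Type*} [TopologicalSpace α] (v : ℕ → Set α) (φ ψ : Form)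
    (x : α) (U : Set α) (hx : x ∈ U) (hU : IsOpen U) :
    sat v (.ann φ (.K ψ)) x U ↔ sat v ((Form.int φ).imp (.K (.ann φ ψ))) x U :=
  reduction_K_general v φ ψ x U
end

section
/- In int-semantics, the reduction scheme [φ]int(ψ) ↔ (int(φ) → int([φ]ψ)) is valid. -/
theorem mem_interior_sep_iff_mem_interior_imp {α : Type*} [TopologicalSpace α] {U V : Set α}
    (hV : IsOpen V) (hVU : V ⊆ U) (P : α → Prop) {z : α} (hz : z ∈ V) :
    z ∈ interior {y ∈ V | P y} ↔ z ∈ interior {y ∈ U | y ∈ V → P y} := by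
  have hsep : {y ∈ V | P y} = V ∩ {y ∈ U | y ∈ V → P y} := by
    ext y
    exact ⟨fun ⟨hyV, hy⟩ => ⟨hyV, hVU hyV, fun _ => hy⟩, fun ⟨hyV, _, hy⟩ => ⟨hyV, hy hyV⟩⟩
  rw [hsep, interior_inter, hV.interior_eq]
  exact and_iff_right hz

theorem reduction_int_general {α : Type*} [TopologicalSpace α] (v : ℕ → Set α) (φ ψ : Form)
    (x : α) (U : Set α) :
    sat v (.ann φ (.int ψ)) x U ↔ sat v ((Form.int φ).imp (.int (.ann φ ψ))) x U := by
  simp only [sat, Form.imp, not_and_not_right]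
  exact forall_congr' fun hx =>
    mem_interior_sep_iff_mem_interior_imp isOpen_interior
      (fun _ hy => (interior_subset hy).1) (sat v ψ · _) hx

/-- Reduction scheme for the interior modality:
`[φ]int(ψ) ↔ (int(φ) → int([φ]ψ))` is valid in int-semantics. -/
theorem reduction_int {α : Type*} [TopologicalSpace α] (v : ℕ → Set α) (φ ψ : Form)
    (x : α) (U : Set α) (hx : x ∈ U) (hU : IsOpen U) :
    sat v (.ann φ (.int ψ)) x U ↔ sat v ((Form.int φ).imp (.int (.ann φ ψ))) x U :=
  reduction_int_general v φ ψ x U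
end

section
/- In int-semantics, the composition scheme [φ][ψ]χ ↔ [int(φ) ∧ [φ]int(ψ)]χ is valid. In particular, int[[int(φ) ∧ [φ]int(ψ)]]^U = int([[ψ]]^{int[[φ]]^U}). -/
section Semantics

variable {α : Type*} [TopologicalSpace α] (v : ℕ → Set α)

/-- The extension `[[φ]]^U` of `φ` in the submodel `U`; announcing `φ` moves to `int [[φ]]^U`. -/
def extension (φ : Form) (U : Set α) : Set α := {y ∈ U | sat v φ y U}

variable {v}

theorem sat_int_iff {φ : Form} {x : α} {U : Set α} :
    sat v (.int φ) x U ↔ x ∈ interior (extension v φ U) := Iff.rfl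

theorem sat_ann_iff {φ ψ : Form} {x : α} {U : Set α} :
    sat v (.ann φ ψ) x U ↔
      (x ∈ interior (extension v φ U) → sat v ψ x (interior (extension v φ U))) := Iff.rfl

theorem interior_extension_subset (φ : Form) (U : Set α) : interior (extension v φ U) ⊆ U :=
  interior_subset.trans fun _ hy => hy.1

theorem extension_int_and_ann_int (φ ψ : Form) (U : Set α) :
    extension v ((Form.int φ).and (.ann φ (.int ψ))) U =
      interior (extension v ψ (interior (extension v φ U))) := by
  ext y
  change y ∈ U ∧ sat v (.int φ) y U ∧ sat v (.ann φ (.int ψ)) y U ↔ _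
  rw [sat_int_iff, sat_ann_iff, sat_int_iff]
  constructor
  · rintro ⟨-, hφ, hψ⟩
    exact hψ hφ
  · intro hψ
    have hφ := interior_extension_subset ψ _ hψ
    exact ⟨interior_extension_subset φ U hφ, hφ, fun _ => hψ⟩

theorem sat_ann_ann_iff {φ ψ χ : Form} {x : α} {U : Set α} :
    sat v (.ann φ (.ann ψ χ)) x U ↔ sat v (.ann ((Form.int φ).and (.ann φ (.int ψ))) χ) x U := by
  rw [sat_ann_iff, sat_ann_iff, sat_ann_iff, extension_int_and_ann_int, interior_interior]
  exact ⟨fun h hψ => h (interior_extension_subset ψ _ hψ) hψ, fun h _ => h⟩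

end Semantics

theorem reduction_composition_general {α : Type*} [TopologicalSpace α] (v : ℕ → Set α) (φ ψ χ : Form)
    (x : α) (U : Set α) :
    (sat v (.ann φ (.ann ψ χ)) x U ↔
      sat v (.ann ((Form.int φ).and (.ann φ (.int ψ))) χ) x U) ∧
    interior {y ∈ U | sat v ((Form.int φ).and (.ann φ (.int ψ))) y U} =
      interior {y ∈ interior {z ∈ U | sat v φ z U} |
        sat v ψ y (interior {z ∈ U | sat v φ z U})} :=
  ⟨sat_ann_ann_iff, (congrArg interior (extension_int_and_ann_int φ ψ U)).trans interior_interior⟩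

/-- Composition scheme: `[φ][ψ]χ ↔ [int(φ) ∧ [φ]int(ψ)]χ` is valid in int-semantics;
in particular `int [[int(φ) ∧ [φ]int(ψ)]]^U = int ([[ψ]]^(int [[φ]]^U))`. -/
theorem reduction_composition {α : Type*} [TopologicalSpace α] (v : ℕ → Set α) (φ ψ χ : Form)
    (x : α) (U : Set α) (hx : x ∈ U) (hU : IsOpen U) :
    (sat v (.ann φ (.ann ψ χ)) x U ↔
      sat v (.ann ((Form.int φ).and (.ann φ (.int ψ))) χ) x U) ∧
    interior {y ∈ U | sat v ((Form.int φ).and (.ann φ (.int ψ))) y U} =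
      interior {y ∈ interior {z ∈ U | sat v φ z U} |
        sat v ψ y (interior {z ∈ U | sat v φ z U})} :=
  reduction_composition_general v φ ψ χ x U
end
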